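/- arXiv:2409.02654 — 3 statements merged into one kernel-verified Lean document; each statement's English description precedes it below -/
import Mathlib

section
/- Let n_1, n_2 ≥ 2 be integers, and let L be the graph Laplacian of the complete bipartite graph K_{n_1,n_2} (equivalently, of the 2-partite graph G_{n_1,n_2}). Then the cokernel ℤ^{n_1+n_2}/im L is isomorphic as an abelian group to ℤ ⊕ (ℤ/n_1ℤ)^{⊕(n_2−2)} ⊕ (ℤ/n_2ℤ)^{⊕(n_1−2)} ⊕ ℤ/(n_1 n_2)ℤ. -/
/-
The Laplacian of `K_{α,β}` acts by `u ↦ (|β| u(a) - Σ_β u, |α| u(b) - Σ_α u)`. Hence `w = (x, y)`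
lies in its image exactly when `Σ w = 0`, the `x(a)` are all congruent mod `|β|`, the `y(b)` are
all congruent mod `|α|`, and `Σ x - |α| x(a₀) + |β| y(b₀) ≡ 0 mod |α||β|` (on `L u` this functional
equals `|α||β| (u(b₀) - u(a₀))`). For `α = Fin n₁`, `β = Fin n₂`, record `Σ w`, the differences
`y(j) - y(0)` mod `n₁` and `x(i) - x(0)` mod `n₂` at the inner indices `0 < i < n - 1`, and that
functional mod `n₁ n₂`: this map onto `ℤ × (ℤ/n₁)^{n₂-2} × (ℤ/n₂)^{n₁-2} × ℤ/n₁n₂` has kernel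
exactly the image, because the difference at the last index is forced by the congruence on the sum.
-/

open Matrix

/-- The `k`-partite graph `G_{n 0, …, n (k-1)}` (parts indexed `0,…,k-1`, part `i` of size `n i`):
two vertices are adjacent iff they lie in consecutive parts. -/
def kpartiteGraph (k : ℕ) (n : ℕ → ℕ) : SimpleGraph (Σ i : Fin k, Fin (n i.val)) where
  Adj v w := v.1.val + 1 = w.1.val ∨ w.1.val + 1 = v.1.val
  symm := ⟨fun v w h => Or.symm h⟩
  loopless := ⟨fun v h => by rcases h with h | h <;> omega⟩

instance (k : ℕ) (n : ℕ → ℕ) : DecidableRel (kpartiteGraph k n).Adj :=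
  fun v w => inferInstanceAs (Decidable (v.1.val + 1 = w.1.val ∨ w.1.val + 1 = v.1.val))

/-- The cokernel `ℤ^m / im M` of a square integer matrix, viewed as a `ℤ`-linear map. -/
abbrev Matrix.cokernel {m : Type*} [Fintype m] (M : Matrix m m ℤ) : Type _ :=
  (m → ℤ) ⧸ LinearMap.range M.mulVecLin

open SimpleGraph Finset

def Matrix.cokernelSubmatrixEquiv {m n : Type*} [Fintype m] [Fintype n] (e : m ≃ n)
    (M : Matrix n n ℤ) : (M.submatrix e e).cokernel ≃+ M.cokernel :=
  (Submodule.Quotient.equiv _ _ (LinearEquiv.funCongrLeft ℤ ℤ e.symm) (by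
    rw [← LinearMap.range_comp]
    have hcomm : (LinearEquiv.funCongrLeft ℤ ℤ e.symm).toLinearMap ∘ₗ (M.submatrix e e).mulVecLin
        = M.mulVecLin ∘ₗ (LinearEquiv.funCongrLeft ℤ ℤ e.symm).toLinearMap := by
      ext v : 1
      simp [submatrix_mulVec_equiv, LinearMap.funLeft, Function.comp_assoc]
    rw [hcomm, LinearMap.range_comp_of_range_eq_top _ (LinearEquiv.range _)])).toAddEquiv

namespace SimpleGraph.Iso

variable {V W : Type*} [Fintype V] [Fintype W] {G : SimpleGraph V} {G' : SimpleGraph W}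
  [DecidableRel G.Adj] [DecidableRel G'.Adj]

theorem lapMatrix_submatrix [DecidableEq V] [DecidableEq W] (R : Type*) [AddGroupWithOne R]
    (φ : G ≃g G') : (G'.lapMatrix R).submatrix φ φ = G.lapMatrix R := by
  ext v w
  by_cases h : G.Adj v w <;>
    simp [lapMatrix, degMatrix, diagonal_apply, φ.injective.eq_iff, φ.map_adj_iff, h]

def lapMatrixCokernelEquiv [DecidableEq V] [DecidableEq W] (φ : G ≃g G') :
    (G.lapMatrix ℤ).cokernel ≃+ (G'.lapMatrix ℤ).cokernel :=
  φ.lapMatrix_submatrix ℤ ▸ cokernelSubmatrixEquiv φ.toEquiv _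

end SimpleGraph.Iso

def kpartiteGraphTwoIso (n₁ n₂ : ℕ) :
    completeBipartiteGraph (Fin n₁) (Fin n₂) ≃g kpartiteGraph 2 (fun i => [n₁, n₂].getD i 0) where
  toFun := Sum.elim (fun a => ⟨0, a⟩) (fun b => ⟨1, b⟩)
  invFun
    | ⟨0, a⟩ => .inl a
    | ⟨1, b⟩ => .inr b
  left_inv := by rintro (a | b) <;> rfl
  right_inv := by rintro ⟨i, a⟩; fin_cases i <;> rfl
  map_rel_iff' := by rintro (a | a) (b | b) <;> simp [kpartiteGraph]

instance {α β : Type*} : DecidableRel (completeBipartiteGraph α β).Adj := fun v w =>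
  inferInstanceAs (Decidable (v.isLeft ∧ w.isRight ∨ v.isRight ∧ w.isLeft))

section CompleteBipartite

variable {α β R : Type*} [Fintype α] [Fintype β] [Ring R]

theorem completeBipartiteGraph_neighborFinset_inl (a : α) :
    (completeBipartiteGraph α β).neighborFinset (.inl a) = univ.map .inr := by
  ext (x | x) <;> simp

theorem completeBipartiteGraph_neighborFinset_inr (b : β) :
    (completeBipartiteGraph α β).neighborFinset (.inr b) = univ.map .inl := by
  ext (x | x) <;> simp

variable [DecidableEq α] [DecidableEq β]

theorem completeBipartiteGraph_lapMatrix_mulVec_inl (u : α ⊕ β → R) (a : α) :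
    ((completeBipartiteGraph α β).lapMatrix R *ᵥ u) (.inl a)
      = Fintype.card β * u (.inl a) - ∑ b, u (.inr b) := by
  rw [lapMatrix_mulVec_apply, ← card_neighborFinset_eq_degree,
    completeBipartiteGraph_neighborFinset_inl, card_map, card_univ, sum_map]
  rfl

theorem completeBipartiteGraph_lapMatrix_mulVec_inr (u : α ⊕ β → R) (b : β) :
    ((completeBipartiteGraph α β).lapMatrix R *ᵥ u) (.inr b)
      = Fintype.card α * u (.inr b) - ∑ a, u (.inl a) := by
  rw [lapMatrix_mulVec_apply, ← card_neighborFinset_eq_degree,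
    completeBipartiteGraph_neighborFinset_inr, card_map, card_univ, sum_map]
  rfl

theorem mem_range_lapMatrix_completeBipartiteGraph_iff (a₀ : α) (b₀ : β) (w : α ⊕ β → ℤ) :
    w ∈ LinearMap.range ((completeBipartiteGraph α β).lapMatrix ℤ).mulVecLin ↔
      ∑ v, w v = 0 ∧
      (∀ a, (Fintype.card β : ℤ) ∣ w (.inl a) - w (.inl a₀)) ∧
      (∀ b, (Fintype.card α : ℤ) ∣ w (.inr b) - w (.inr b₀)) ∧
      (Fintype.card α * Fintype.card β : ℤ) ∣
        ∑ a, w (.inl a) - Fintype.card α * w (.inl a₀) + Fintype.card β * w (.inr b₀) := by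
  constructor
  · rintro ⟨u, rfl⟩
    simp only [Matrix.mulVecLin_apply, completeBipartiteGraph_lapMatrix_mulVec_inl,
      completeBipartiteGraph_lapMatrix_mulVec_inr, Fintype.sum_sum_type, sum_sub_distrib,
      ← mul_sum, sum_const, card_univ, nsmul_eq_mul]
    refine ⟨by ring, fun a => ⟨u (.inl a) - u (.inl a₀), by ring⟩,
      fun b => ⟨u (.inr b) - u (.inr b₀), by ring⟩, ⟨u (.inr b₀) - u (.inl a₀), by ring⟩⟩
  · rintro ⟨hsum, hx, hy, ⟨k, hk⟩⟩
    choose p hp using hx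
    choose q hq using hy
    have hn₁ : (Fintype.card α : ℤ) ≠ 0 := by have : Nonempty α := ⟨a₀⟩; positivity
    have hn₂ : (Fintype.card β : ℤ) ≠ 0 := by have : Nonempty β := ⟨b₀⟩; positivity
    have hP := Fintype.sum_congr _ _ hp
    have hQ := Fintype.sum_congr _ _ hq
    simp only [Fintype.sum_sum_type] at hsum
    simp only [sum_sub_distrib, ← mul_sum, sum_const, card_univ, nsmul_eq_mul] at hP hQ
    have hsum_p : ∑ a, p a = Fintype.card α * k - w (.inr b₀) :=
      mul_left_cancel₀ hn₂ (by linear_combination -hP + hk)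
    have hsum_q : ∑ b, q b = -(Fintype.card β * k) - w (.inl a₀) :=
      mul_left_cancel₀ hn₁ (by linear_combination -hQ - hk + hsum)
    refine ⟨Sum.elim p (fun b => q b + k), funext ?_⟩
    rintro (a | b)
    · simp only [Matrix.mulVecLin_apply, completeBipartiteGraph_lapMatrix_mulVec_inl,
        Sum.elim_inl, Sum.elim_inr, sum_add_distrib, hsum_q, sum_const, card_univ, nsmul_eq_mul]
      linear_combination -hp a
    · simp only [Matrix.mulVecLin_apply, completeBipartiteGraph_lapMatrix_mulVec_inr,
        Sum.elim_inl, Sum.elim_inr, hsum_p]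
      linear_combination -hq b

end CompleteBipartite

namespace Fin

theorem dvd_of_dvd_inner_of_dvd_sum {R : Type*} [Ring R] {k : ℕ} {d : R}
    {f : Fin (k + 2) → R} (h0 : d ∣ f 0) (hinner : ∀ i : Fin k, d ∣ f i.castSucc.succ)
    (hsum : d ∣ ∑ a, f a) (a : Fin (k + 2)) : d ∣ f a := by
  rw [sum_univ_succ, sum_univ_castSucc] at hsum
  have hlast : d ∣ f (last k).succ :=
    (dvd_add_right (dvd_sum fun i _ => hinner i)).1 ((dvd_add_right h0).1 hsum)
  induction a using Fin.cases with
  | zero => exact h0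
  | succ j =>
    induction j using Fin.lastCases with
    | last => exact hlast
    | cast i => exact hinner i

theorem exists_inner_eq_sum_eq {M : Type*} [AddCommGroup M] {k : ℕ} (g : Fin k → M) (s : M) :
    ∃ x : Fin (k + 2) → M, x 0 = 0 ∧ (∀ i, x i.castSucc.succ = g i) ∧ ∑ a, x a = s :=
  ⟨cons 0 (snoc g (s - ∑ i, g i)), rfl, fun i => by simp, by simp [sum_cons, sum_snoc]⟩

end Fin

section Model

variable (k₁ k₂ : ℕ)

abbrev completeBipartiteCriticalGroupModel : Type :=
  ℤ × (Fin k₂ → ZMod (k₁ + 2)) × (Fin k₁ → ZMod (k₂ + 2)) × ZMod ((k₁ + 2) * (k₂ + 2))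

def completeBipartiteCokernelMap :
    (Fin (k₁ + 2) ⊕ Fin (k₂ + 2) → ℤ) →ₗ[ℤ] completeBipartiteCriticalGroupModel k₁ k₂ :=
  AddMonoidHom.toIntLinearMap <| AddMonoidHom.mk' (fun w => (∑ v, w v,
    fun i => ((w (.inr i.castSucc.succ) - w (.inr 0) : ℤ) : ZMod (k₁ + 2)),
    fun i => ((w (.inl i.castSucc.succ) - w (.inl 0) : ℤ) : ZMod (k₂ + 2)),
    ((∑ a, w (.inl a) - (k₁ + 2 : ℕ) * w (.inl 0) + (k₂ + 2 : ℕ) * w (.inr 0) : ℤ) : ZMod _)))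
    fun w w' => by
      ext <;> simp only [Pi.add_apply, sum_add_distrib, Prod.fst_add, Prod.snd_add] <;>
        push_cast <;> ring

theorem ker_completeBipartiteCokernelMap :
    LinearMap.ker (completeBipartiteCokernelMap k₁ k₂) = LinearMap.range
      ((completeBipartiteGraph (Fin (k₁ + 2)) (Fin (k₂ + 2))).lapMatrix ℤ).mulVecLin := by
  ext w
  rw [mem_range_lapMatrix_completeBipartiteGraph_iff 0 0, Fintype.card_fin, Fintype.card_fin,
    LinearMap.mem_ker]
  simp only [completeBipartiteCokernelMap, AddMonoidHom.coe_toIntLinearMap,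
    AddMonoidHom.mk'_apply, Prod.mk_eq_zero, funext_iff, Pi.zero_apply,
    ZMod.intCast_zmod_eq_zero_iff_dvd, Nat.cast_mul]
  constructor
  · rintro ⟨hsum, hy, hx, hk⟩
    rw [Fintype.sum_sum_type] at hsum
    refine ⟨by rwa [Fintype.sum_sum_type], Fin.dvd_of_dvd_inner_of_dvd_sum (by simp) hx ?_,
      Fin.dvd_of_dvd_inner_of_dvd_sum (by simp) hy ?_, hk⟩
    · have hsum_inl : ∑ a, (w (.inl a) - w (.inl 0)) = ∑ a, w (.inl a) - ↑(k₁ + 2) * w (.inl 0)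
          + ↑(k₂ + 2) * w (.inr 0) - ↑(k₂ + 2) * w (.inr 0) := by
        simp [sum_sub_distrib]
      rw [hsum_inl]
      exact dvd_sub ((dvd_mul_left _ _).trans hk) (dvd_mul_right _ _)
    · have hsum_inr : ∑ b, (w (.inr b) - w (.inr 0)) = -(∑ a, w (.inl a) - ↑(k₁ + 2) * w (.inl 0)
          + ↑(k₂ + 2) * w (.inr 0)) - ↑(k₁ + 2) * w (.inl 0) := by
        simp [sum_sub_distrib]
        linear_combination hsum
      rw [hsum_inr]
      exact dvd_sub ((dvd_mul_right _ _).trans hk).neg_right (dvd_mul_right _ _)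
  · rintro ⟨hsum, hx, hy, hk⟩
    exact ⟨hsum, fun i => hy _, fun i => hx _, hk⟩

theorem completeBipartiteCokernelMap_surjective :
    Function.Surjective (completeBipartiteCokernelMap k₁ k₂) := by
  rintro ⟨m, β, γ, δ⟩
  obtain ⟨x, hx0, hx, hxsum⟩ := Fin.exists_inner_eq_sum_eq (fun i => ((γ i).cast : ℤ)) δ.cast
  obtain ⟨y, hy0, hy, hysum⟩ := Fin.exists_inner_eq_sum_eq (fun i => ((β i).cast : ℤ)) (m - δ.cast)
  refine ⟨Sum.elim x y, ?_⟩
  simp [completeBipartiteCokernelMap, Fintype.sum_sum_type, hx0, hy0, hx, hy, hxsum, hysum,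
    -Int.cast_sum]

noncomputable def completeBipartiteCokernelEquiv :
    ((completeBipartiteGraph (Fin (k₁ + 2)) (Fin (k₂ + 2))).lapMatrix ℤ).cokernel ≃+
      completeBipartiteCriticalGroupModel k₁ k₂ :=
  ((Submodule.quotEquivOfEq _ _ (ker_completeBipartiteCokernelMap k₁ k₂).symm).trans
    ((completeBipartiteCokernelMap k₁ k₂).quotKerEquivOfSurjective
      (completeBipartiteCokernelMap_surjective k₁ k₂))).toAddEquiv

end Model

/-- The cokernel of the Laplacian of the complete bipartite graph `K_{n₁,n₂}`
(equivalently, the 2-partite graph `G_{n₁,n₂}`) is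
`ℤ ⊕ (ℤ/n₁ℤ)^{n₂-2} ⊕ (ℤ/n₂ℤ)^{n₁-2} ⊕ ℤ/(n₁n₂)ℤ`. -/
theorem critical_group_bipartite (n₁ n₂ : ℕ) (h₁ : 2 ≤ n₁) (h₂ : 2 ≤ n₂) :
    Nonempty (
      (((kpartiteGraph 2 (fun i => [n₁, n₂].getD i 0)).lapMatrix ℤ).cokernel)
        ≃+
      (ℤ × (Fin (n₂ - 2) → ZMod n₁) × (Fin (n₁ - 2) → ZMod n₂) × ZMod (n₁ * n₂))) := by
  obtain ⟨k₁, rfl⟩ := Nat.exists_eq_add_of_le' h₁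
  obtain ⟨k₂, rfl⟩ := Nat.exists_eq_add_of_le' h₂
  -- `Fin (k + 2 - 2)` is `Fin k` by definitional unfolding of `Nat.sub`
  exact ⟨(kpartiteGraphTwoIso _ _).lapMatrixCokernelEquiv.symm.trans
    (completeBipartiteCokernelEquiv k₁ k₂)⟩
end

section
/- Let n_1, n_2 ≥ 1 be integers and let L_3 be the 4×4 integer matrix [[n_2, 0, −n_2, −1], [0, n_2, 0, 0], [−n_1, −1, n_1, 0], [0, 0, 0, n_1]]. Then the cokernel ℤ⁴/im L_3 is isomorphic as an abelian group to ℤ ⊕ ℤ/(n_1 n_2)ℤ. -/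
open Matrix

/-- The cokernel of the `4 × 4` matrix `L₃` arising in the reduction of the Laplacian of the
complete bipartite graph `G_{n₁,n₂}` is `ℤ ⊕ ℤ/(n₁n₂)ℤ`. -/
theorem coker_L3_bipartite (n₁ n₂ : ℕ) (h₁ : 1 ≤ n₁) (h₂ : 1 ≤ n₂) :
    Nonempty (
      (!![(n₂ : ℤ), 0, -(n₂ : ℤ), -1;
          0, (n₂ : ℤ), 0, 0;
          -(n₁ : ℤ), -1, (n₁ : ℤ), 0;
          0, 0, 0, (n₁ : ℤ)] : Matrix (Fin 4) (Fin 4) ℤ).cokernel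
        ≃+
      (ℤ × ZMod (n₁ * n₂))) := by
  have hN : (n₁ * n₂ : ℕ) ≠ 0 := by positivity
  haveI : NeZero (n₁ * n₂) := ⟨hN⟩
  set M : Matrix (Fin 4) (Fin 4) ℤ :=
    !![(n₂ : ℤ), 0, -(n₂ : ℤ), -1;
       0, (n₂ : ℤ), 0, 0;
       -(n₁ : ℤ), -1, (n₁ : ℤ), 0;
       0, 0, 0, (n₁ : ℤ)] with hM
  let f : (Fin 4 → ℤ) →ₗ[ℤ] ℤ × ZMod (n₁ * n₂) :=
    { toFun := fun v => (v 1 + n₂ * v 2 + v 3 + n₁ * v 0, ((v 3 + n₁ * v 0 : ℤ) : ZMod (n₁ * n₂)))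
      map_add' := by
        intro a b
        simp only [Pi.add_apply, Prod.mk_add_mk, Prod.mk.injEq]
        constructor
        · ring
        · push_cast; ring
      map_smul' := by
        intro c a
        simp only [Pi.smul_apply, smul_eq_mul, RingHom.id_apply, Prod.smul_mk, Prod.mk.injEq,
          zsmul_eq_mul]
        constructor
        · ring
        · push_cast; ring }
  have hsurj : Function.Surjective f := by
    rintro ⟨s, t⟩
    refine ⟨![0, s - (t.val : ℤ), 0, (t.val : ℤ)], ?_⟩
    simp only [f, LinearMap.coe_mk, AddHom.coe_mk, Matrix.cons_val_zero, Matrix.cons_val_one,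
      Matrix.head_cons, Matrix.cons_val_two, Matrix.cons_val_three, Matrix.tail_cons,
      Prod.mk.injEq]
    constructor
    · ring
    · push_cast
      simp [ZMod.natCast_val, ZMod.cast_id]
  have hker : LinearMap.range M.mulVecLin = LinearMap.ker f := by
    apply le_antisymm
    · rintro v ⟨u, rfl⟩
      simp only [LinearMap.mem_ker, mulVecLin_apply]
      have e0 : M.mulVec u 0 = n₂ * u 0 - n₂ * u 2 - u 3 := by
        simp [hM, Matrix.mulVec, dotProduct, Fin.sum_univ_four]; ring
      have e1 : M.mulVec u 1 = n₂ * u 1 := by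
        simp [hM, Matrix.mulVec, dotProduct, Fin.sum_univ_four]
      have e2 : M.mulVec u 2 = -(n₁ : ℤ) * u 0 - u 1 + n₁ * u 2 := by
        simp [hM, Matrix.mulVec, dotProduct, Fin.sum_univ_four]; ring
      have e3 : M.mulVec u 3 = n₁ * u 3 := by
        simp [hM, Matrix.mulVec, dotProduct, Fin.sum_univ_four]
      simp only [f, LinearMap.coe_mk, AddHom.coe_mk, e0, e1, e2, e3, Prod.mk_eq_zero]
      constructor
      · ring
      · rw [ZMod.intCast_zmod_eq_zero_iff_dvd]
        exact ⟨u 0 - u 2, by push_cast; ring⟩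
    · intro v hv
      simp only [LinearMap.mem_ker, f, LinearMap.coe_mk, AddHom.coe_mk, Prod.mk_eq_zero] at hv
      obtain ⟨h1, h2⟩ := hv
      rw [ZMod.intCast_zmod_eq_zero_iff_dvd] at h2
      obtain ⟨a, ha⟩ := h2
      push_cast at ha
      refine ⟨![a, -(n₁ : ℤ) * a - v 2, 0, (n₂ : ℤ) * a - v 0], ?_⟩
      rw [mulVecLin_apply]
      funext i
      fin_cases i <;>
        simp [hM, Matrix.mulVec, dotProduct, Fin.sum_univ_four] <;> linarith
  exact ⟨((Submodule.quotEquivOfEq _ _ hker).trans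
    (f.quotKerEquivOfSurjective hsurj)).toAddEquiv⟩
end

section
/- Let n_2, n_3, n_4 ≥ 1 be integers, and let L_7 be the 3×3 integer matrix [[−(n_2+n_4), n_2, 0], [0, n_2 n_3, n_2], [0, 0, −n_4]]. Set σ_1 = gcd(n_2, n_4, n_2+n_4, n_2 n_3) and σ_2 = gcd(n_2², n_2 n_4, n_2 n_3 n_4, n_2(n_2+n_4), n_4(n_2+n_4), n_2 n_3(n_2+n_4)). Then the cokernel ℤ³/im L_7 is isomorphic as an abelian group to ℤ/σ_1ℤ ⊕ ℤ/(σ_2/σ_1)ℤ ⊕ ℤ/((n_2 n_3 n_4(n_2+n_4))/σ_2)ℤ; equivalently, the invariant factors of the Smith normal form of L_7 are σ_1, σ_2/σ_1, and n_2 n_3 n_4(n_2+n_4)/σ_2. -/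
open Matrix

private lemma coker_equiv_aux {n : Type*} [Fintype n] [DecidableEq n] {L D P Q : Matrix n n ℤ}
    (hP : IsUnit P.det) (hQ : IsUnit Q.det) (h : P * L * Q = D) :
    Nonempty (L.cokernel ≃+ D.cokernel) := by
  have hPinv := P.invertibleOfIsUnitDet hP
  have hQinv := Q.invertibleOfIsUnitDet hQ
  let e : (n → ℤ) ≃ₗ[ℤ] (n → ℤ) := P.toLinearEquiv' hPinv
  have he : (e : (n → ℤ) →ₗ[ℤ] (n → ℤ)) = P.mulVecLin := by
    rw [← Matrix.toLin'_apply']; rfl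
  have hQs : LinearMap.range Q.mulVecLin = ⊤ := by
    rw [← Matrix.toLin'_apply']
    exact (Q.toLinearEquiv' hQinv).range
  have hmap : (LinearMap.range L.mulVecLin).map (e : (n → ℤ) →ₗ[ℤ] (n → ℤ))
      = LinearMap.range D.mulVecLin := by
    rw [he, ← h, Matrix.mulVecLin_mul, Matrix.mulVecLin_mul,
      LinearMap.range_comp_of_range_eq_top _ hQs, LinearMap.range_comp]
  exact ⟨(Submodule.Quotient.equiv _ _ e hmap).toAddEquiv⟩

private noncomputable def zmodCastAux (k : ℕ) : ℤ →ₗ[ℤ] ZMod k where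
  toFun x := (x : ZMod k)
  map_add' x y := by push_cast; ring
  map_smul' r x := by simp [zsmul_eq_mul]

@[simp] private lemma zmodCastAux_apply (k : ℕ) (x : ℤ) : zmodCastAux k x = (x : ZMod k) := rfl

private lemma coker_diagonal_aux (d : Fin 3 → ℕ) :
    Nonempty ((Matrix.diagonal (fun i => (d i : ℤ))).cokernel ≃+
      (ZMod (d 0) × ZMod (d 1) × ZMod (d 2))) := by
  let φ : (Fin 3 → ℤ) →ₗ[ℤ] ZMod (d 0) × ZMod (d 1) × ZMod (d 2) :=
    LinearMap.prod ((zmodCastAux (d 0)).comp (LinearMap.proj 0))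
      (LinearMap.prod ((zmodCastAux (d 1)).comp (LinearMap.proj 1))
        ((zmodCastAux (d 2)).comp (LinearMap.proj 2)))
  have hφ : ∀ x : Fin 3 → ℤ, φ x = ((x 0 : ZMod (d 0)), (x 1 : ZMod (d 1)), (x 2 : ZMod (d 2))) :=
    fun x => rfl
  have hsurj : Function.Surjective φ := by
    rintro ⟨x, y, z⟩
    obtain ⟨x', hx⟩ := ZMod.intCast_surjective x
    obtain ⟨y', hy⟩ := ZMod.intCast_surjective y
    obtain ⟨z', hz⟩ := ZMod.intCast_surjective z
    refine ⟨![x', y', z'], ?_⟩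
    rw [hφ]
    simp [hx, hy, hz]
  have hker : LinearMap.range (Matrix.diagonal (fun i => (d i : ℤ))).mulVecLin
      = LinearMap.ker φ := by
    ext x
    rw [LinearMap.mem_ker, hφ, Prod.mk_eq_zero, Prod.mk_eq_zero,
      ZMod.intCast_zmod_eq_zero_iff_dvd, ZMod.intCast_zmod_eq_zero_iff_dvd,
      ZMod.intCast_zmod_eq_zero_iff_dvd]
    constructor
    · rintro ⟨y, rfl⟩
      refine ⟨?_, ?_, ?_⟩ <;>
        · rw [Matrix.mulVecLin_apply, Matrix.mulVec_diagonal]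
          exact Dvd.intro _ rfl
    · rintro ⟨⟨c₀, hc₀⟩, ⟨c₁, hc₁⟩, ⟨c₂, hc₂⟩⟩
      refine ⟨![c₀, c₁, c₂], funext fun i => ?_⟩
      rw [Matrix.mulVecLin_apply, Matrix.mulVec_diagonal]
      fin_cases i <;> simp [hc₀, hc₁, hc₂]
  exact ⟨((Submodule.quotEquivOfEq _ _ hker).trans
    (φ.quotKerEquivOfSurjective hsurj)).toAddEquiv⟩

/-- The cokernel of the `3 × 3` matrix `L₇` arising in the reduction of the Laplacian of the
5-partite graph is `ℤ/σ₁ℤ ⊕ ℤ/(σ₂/σ₁)ℤ ⊕ ℤ/(n₂n₃n₄(n₂+n₄)/σ₂)ℤ`; equivalently, the invariant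
factors of its Smith normal form are `σ₁`, `σ₂/σ₁` and `n₂n₃n₄(n₂+n₄)/σ₂`. -/
theorem coker_L7_fivePartite (n₂ n₃ n₄ : ℕ) (h₂ : 1 ≤ n₂) (h₃ : 1 ≤ n₃) (h₄ : 1 ≤ n₄)
    (σ₁ σ₂ : ℕ)
    (hσ₁ : σ₁ = Nat.gcd n₂ (Nat.gcd n₄ (Nat.gcd (n₂ + n₄) (n₂ * n₃))))
    (hσ₂ : σ₂ = Nat.gcd (n₂ ^ 2) (Nat.gcd (n₂ * n₄) (Nat.gcd (n₂ * n₃ * n₄)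
      (Nat.gcd (n₂ * (n₂ + n₄)) (Nat.gcd (n₄ * (n₂ + n₄)) (n₂ * n₃ * (n₂ + n₄))))))) :
    Nonempty (
      (!![-((n₂ : ℤ) + (n₄ : ℤ)), (n₂ : ℤ), 0;
          0, (n₂ : ℤ) * (n₃ : ℤ), (n₂ : ℤ);
          0, 0, -(n₄ : ℤ)] : Matrix (Fin 3) (Fin 3) ℤ).cokernel
        ≃+
      (ZMod σ₁ × ZMod (σ₂ / σ₁) × ZMod (n₂ * n₃ * n₄ * (n₂ + n₄) / σ₂)))
    ∧
    ∃ P Q : Matrix (Fin 3) (Fin 3) ℤ, IsUnit P.det ∧ IsUnit Q.det ∧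
      P * (!![-((n₂ : ℤ) + (n₄ : ℤ)), (n₂ : ℤ), 0;
              0, (n₂ : ℤ) * (n₃ : ℤ), (n₂ : ℤ);
              0, 0, -(n₄ : ℤ)]) * Q =
        Matrix.diagonal ![(σ₁ : ℤ), ((σ₂ / σ₁ : ℕ) : ℤ),
          ((n₂ * n₃ * n₄ * (n₂ + n₄) / σ₂ : ℕ) : ℤ)] := by
  set g := Nat.gcd n₂ n₄ with hg
  have gpos : 0 < g := Nat.gcd_pos_of_pos_left n₄ h₂
  obtain ⟨a, ha⟩ : g ∣ n₂ := Nat.gcd_dvd_left n₂ n₄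
  obtain ⟨b, hb⟩ : g ∣ n₄ := Nat.gcd_dvd_right n₂ n₄
  have hab : Nat.Coprime a b := by
    have := Nat.coprime_div_gcd_div_gcd (m := n₂) (n := n₄) gpos
    rwa [← hg, ha, hb, Nat.mul_div_cancel_left a gpos, Nat.mul_div_cancel_left b gpos] at this
  have hσ₁g : σ₁ = g := by
    rw [hσ₁]
    apply Nat.dvd_antisymm
    · exact Nat.dvd_gcd (Nat.gcd_dvd_left _ _)
        ((Nat.gcd_dvd_right _ _).trans (Nat.gcd_dvd_left _ _))
    · exact Nat.dvd_gcd (Nat.gcd_dvd_left _ _) (Nat.dvd_gcd (Nat.gcd_dvd_right _ _)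
        (Nat.dvd_gcd (dvd_add (Nat.gcd_dvd_left _ _) (Nat.gcd_dvd_right _ _))
          ((Nat.gcd_dvd_left _ _).mul_right n₃)))
  have hgcd2 : Nat.gcd (n₂ ^ 2) (Nat.gcd (n₂ * n₄) (n₄ ^ 2)) = g ^ 2 := by
    have h1 : Nat.gcd (a ^ 2) (Nat.gcd (a * b) (b ^ 2)) = 1 := by
      have hd : Nat.gcd (a ^ 2) (Nat.gcd (a * b) (b ^ 2)) ∣ Nat.gcd (a ^ 2) (b ^ 2) :=
        Nat.dvd_gcd (Nat.gcd_dvd_left _ _)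
          ((Nat.gcd_dvd_right _ _).trans (Nat.gcd_dvd_right _ _))
      have h2 : Nat.gcd (a ^ 2) (b ^ 2) = 1 := Nat.Coprime.pow 2 2 hab
      rw [h2] at hd
      exact Nat.dvd_one.mp hd
    rw [ha, hb, mul_pow, mul_pow, show g * a * (g * b) = g ^ 2 * (a * b) by ring,
      Nat.gcd_mul_left, Nat.gcd_mul_left, h1, mul_one]
  have hσ₂g : σ₂ = g ^ 2 := by
    apply Nat.dvd_antisymm
    · rw [← hgcd2]
      have hd1 : σ₂ ∣ n₂ ^ 2 := hσ₂ ▸ Nat.gcd_dvd_left _ _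
      have hd2 : σ₂ ∣ n₂ * n₄ := hσ₂ ▸ (Nat.gcd_dvd_right _ _).trans (Nat.gcd_dvd_left _ _)
      have hd3 : σ₂ ∣ n₄ * (n₂ + n₄) := hσ₂ ▸ (Nat.gcd_dvd_right _ _).trans
        ((Nat.gcd_dvd_right _ _).trans ((Nat.gcd_dvd_right _ _).trans
          ((Nat.gcd_dvd_right _ _).trans (Nat.gcd_dvd_left _ _))))
      have hd4 : σ₂ ∣ n₄ ^ 2 := by
        rw [show n₄ * (n₂ + n₄) = n₂ * n₄ + n₄ ^ 2 by ring] at hd3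
        exact (Nat.dvd_add_right hd2).mp hd3
      exact Nat.dvd_gcd hd1 (Nat.dvd_gcd hd2 hd4)
    · rw [hσ₂]
      refine Nat.dvd_gcd ⟨a ^ 2, by rw [ha]; ring⟩ (Nat.dvd_gcd ⟨a * b, by rw [ha, hb]; ring⟩
        (Nat.dvd_gcd ⟨a * n₃ * b, by rw [ha, hb]; ring⟩
          (Nat.dvd_gcd ⟨a * (a + b), by rw [ha, hb]; ring⟩
            (Nat.dvd_gcd ⟨b * (a + b), by rw [ha, hb]; ring⟩
              ⟨a * n₃ * (a + b), by rw [ha, hb]; ring⟩))))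
  have h21 : σ₂ / σ₁ = g := by
    rw [hσ₁g, hσ₂g, pow_two, Nat.mul_div_cancel_left g gpos]
  have hKnat : n₂ * n₃ * n₄ * (n₂ + n₄) / σ₂ = g * (a * b * n₃ * (a + b)) := by
    rw [hσ₂g, show n₂ * n₃ * n₄ * (n₂ + n₄) = g ^ 2 * (g * (a * b * n₃ * (a + b))) by
      rw [ha, hb]; ring, Nat.mul_div_cancel_left _ (by positivity)]
  -- integer Bézout data
  have hgz : (g : ℤ) ≠ 0 := by exact_mod_cast gpos.ne'
  have ha' : (n₂ : ℤ) = (g : ℤ) * (a : ℤ) := by exact_mod_cast ha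
  have hb' : (n₄ : ℤ) = (g : ℤ) * (b : ℤ) := by exact_mod_cast hb
  set u := Int.gcdA (n₂ : ℤ) (n₄ : ℤ) with hu
  set v := Int.gcdB (n₂ : ℤ) (n₄ : ℤ) with hv
  have hbez : (a : ℤ) * u + (b : ℤ) * v = 1 := by
    have h1 := Int.gcd_eq_gcd_ab (n₂ : ℤ) (n₄ : ℤ)
    rw [Int.gcd_natCast_natCast, ← hg] at h1
    apply mul_left_cancel₀ hgz
    rw [mul_one]
    linear_combination -h1 - u * ha' - v * hb'
  set L : Matrix (Fin 3) (Fin 3) ℤ :=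
    !![-((n₂ : ℤ) + (n₄ : ℤ)), (n₂ : ℤ), 0;
       0, (n₂ : ℤ) * (n₃ : ℤ), (n₂ : ℤ);
       0, 0, -(n₄ : ℤ)] with hLdef
  set Pm : Matrix (Fin 3) (Fin 3) ℤ :=
    !![1, 0, 0;
       0, u, -v;
       (a : ℤ) * (b : ℤ) * (n₃ : ℤ) * (u - v), -(b : ℤ), -(a : ℤ)] with hPdef
  set Qm : Matrix (Fin 3) (Fin 3) ℤ :=
    !![-v, 0, -(a : ℤ);
       u - v, 0, -((a : ℤ) + (b : ℤ));
       -(u * (a : ℤ) * (n₃ : ℤ)) * (u - v), 1, (u * (a : ℤ) * (n₃ : ℤ)) * ((a : ℤ) + (b : ℤ))]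
    with hQdef
  have hPdet : Pm.det = -1 := by
    rw [hPdef, Matrix.det_fin_three]
    simp
    linear_combination -hbez
  have hQdet : Qm.det = -1 := by
    rw [hQdef, Matrix.det_fin_three]
    simp
    linear_combination -hbez
  have hPu : IsUnit Pm.det := by rw [hPdet]; exact isUnit_one.neg
  have hQu : IsUnit Qm.det := by rw [hQdet]; exact isUnit_one.neg
  have key : Pm * L * Qm
      = Matrix.diagonal (fun i => ((![g, g, g * (a * b * n₃ * (a + b))] : Fin 3 → ℕ) i : ℤ)) := by
    ext i j
    fin_cases i <;> fin_cases j <;>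
      simp [hPdef, hQdef, hLdef, Matrix.mul_apply, Fin.sum_univ_three, Matrix.diagonal,
        ha', hb'] <;>
      push_cast <;>
      ring_nf
    · linear_combination (g : ℤ) * hbez
    · linear_combination (g : ℤ) * (a : ℤ) * u * (n₃ : ℤ) * ((v : ℤ) - u) * hbez
    · linear_combination (g : ℤ) * hbez
    · linear_combination (g : ℤ) * (a : ℤ) * u * (n₃ : ℤ) * ((b : ℤ) + (a : ℤ)) * hbez
    · linear_combination (g : ℤ) * (a : ℤ) * (b : ℤ) * (n₃ : ℤ) * (u - v) * hbez
  constructor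
  · obtain ⟨e1⟩ := coker_equiv_aux hPu hQu key
    obtain ⟨e2⟩ := coker_diagonal_aux ![g, g, g * (a * b * n₃ * (a + b))]
    rw [h21, hKnat, hσ₁g]
    exact ⟨e1.trans e2⟩
  · refine ⟨Pm, Qm, hPu, hQu, ?_⟩
    have hvec : ![(σ₁ : ℤ), ((σ₂ / σ₁ : ℕ) : ℤ), ((n₂ * n₃ * n₄ * (n₂ + n₄) / σ₂ : ℕ) : ℤ)]
        = (fun i => ((![g, g, g * (a * b * n₃ * (a + b))] : Fin 3 → ℕ) i : ℤ)) := by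
      funext i
      fin_cases i
      · show ((σ₁ : ℕ) : ℤ) = ((g : ℕ) : ℤ)
        exact_mod_cast congrArg (Nat.cast : ℕ → ℤ) hσ₁g
      · show ((σ₂ / σ₁ : ℕ) : ℤ) = ((g : ℕ) : ℤ)
        exact_mod_cast congrArg (Nat.cast : ℕ → ℤ) h21
      · show ((n₂ * n₃ * n₄ * (n₂ + n₄) / σ₂ : ℕ) : ℤ) = ((g * (a * b * n₃ * (a + b)) : ℕ) : ℤ)
        exact_mod_cast congrArg (Nat.cast : ℕ → ℤ) hKnat
    rw [key, hvec]
end
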